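/- For all symmetric probability measures x1, x2, x3, x4 ∈ X, H((x1 − x2) ⊛ (x3 − x4)) + H((x1 − x2) ⊠ (x3 − x4)) = 0, where the operations and H are extended bilinearly and linearly to signed measures. -/

import Mathlib

open MeasureTheory Real Filter Topology Polynomial

noncomputable section

/-- The space of finite signed Borel measures on the extended reals `ℝ̄`. -/
abbrev SM := MeasureTheory.SignedMeasure EReal

namespace SCLDPC

/-- The weight `e^{-α/2}` as an extended nonnegative real (`+∞` at `α = -∞`). -/
def wt (α : EReal) : ENNReal :=
  if α = ⊥ then ⊤ else if α = ⊤ then 0 else ENNReal.ofReal (Real.exp (-(α.toReal) / 2))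

/-- A (nonnegative) Borel measure `μ` on `ℝ̄` is symmetric if
`∫_{-E} e^{-α/2} μ(dα) = ∫_{E} e^{-α/2} μ(dα)` for every Borel set `E`
(stated with extended nonnegative integrals, which is equivalent to requiring
equality whenever one of the two sides is finite). -/
def IsSymmMeasure (μ : Measure EReal) : Prop :=
  ∀ E : Set EReal, MeasurableSet E →
    ∫⁻ α in (fun a : EReal => -a) ⁻¹' E, wt α ∂μ = ∫⁻ α in E, wt α ∂μ

/-- Positive part of the Jordan decomposition. -/
def jp (x : SM) : Measure EReal := x.toJordanDecomposition.posPart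

/-- Negative part of the Jordan decomposition. -/
def jn (x : SM) : Measure EReal := x.toJordanDecomposition.negPart

instance (x : SM) : IsFiniteMeasure (jp x) := x.toJordanDecomposition.posPart_finite

instance (x : SM) : IsFiniteMeasure (jn x) := x.toJordanDecomposition.negPart_finite

/-- A finite signed Borel measure on `ℝ̄` is symmetric iff both parts of its Jordan
decomposition are symmetric measures. -/
def IsSymm (x : SM) : Prop := IsSymmMeasure (jp x) ∧ IsSymmMeasure (jn x)

/-- Membership in `X`, the set of symmetric probability measures on `ℝ̄`. -/
def MemX (x : SM) : Prop :=
  (∃ (μ : Measure EReal) (hμ : IsProbabilityMeasure μ),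
      x = (letI := hμ; μ.toSignedMeasure)) ∧ IsSymm x

/-- Membership in `X_d`, the set of differences of symmetric probability measures. -/
def MemXd (y : SM) : Prop := ∃ x1 x2 : SM, MemX x1 ∧ MemX x2 ∧ y = x1 - x2

/-- Integral of a real function against a finite signed measure. -/
def sInt (f : EReal → ℝ) (x : SM) : ℝ := (∫ α, f α ∂(jp x)) - ∫ α, f α ∂(jn x)

/-- `tanh(α/2)` extended continuously to `ℝ̄`. -/
def tanhHalf (α : EReal) : ℝ :=
  if α = ⊤ then 1 else if α = ⊥ then -1 else Real.tanh (α.toReal / 2)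

/-- The inverse hyperbolic tangent on `(-1, 1)`. -/
def artanh (t : ℝ) : ℝ := Real.log ((1 + t) / (1 - t)) / 2

/-- `2 tanh⁻¹(t)` valued in `ℝ̄` (sending `t ≥ 1` to `+∞` and `t ≤ -1` to `-∞`). -/
def atanhTwo (t : ℝ) : EReal :=
  if 1 ≤ t then ⊤ else if t ≤ -1 then ⊥ else ((2 * artanh t : ℝ) : EReal)

/-- Variable-node convolution `⊛` of two (nonnegative) measures:
`(μ ⊛ ν)(E) = ∫ μ(E - α) ν(dα)`, i.e. the pushforward of `μ × ν` under addition. -/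
def mConv (μ ν : Measure EReal) : Measure EReal :=
  (μ.prod ν).map fun p => p.1 + p.2

/-- Check-node convolution `⊠` of two (nonnegative) measures:
`(μ ⊠ ν)(E) = ∫ μ(2 tanh⁻¹(tanh(E/2) / tanh(α/2))) ν(dα)`, where the argument of `μ`
is the image of `E` under `β ↦ 2 tanh⁻¹(tanh(β/2) / tanh(α/2))`; equivalently, the
pushforward of `μ × ν` under `(β, α) ↦ 2 tanh⁻¹(tanh(β/2) · tanh(α/2))`. -/
def mCheck (μ ν : Measure EReal) : Measure EReal :=
  (μ.prod ν).map fun p => atanhTwo (tanhHalf p.1 * tanhHalf p.2)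

instance (μ ν : Measure EReal) [IsFiniteMeasure μ] [IsFiniteMeasure ν] :
    IsFiniteMeasure (mConv μ ν) := by unfold mConv; infer_instance

instance (μ ν : Measure EReal) [IsFiniteMeasure μ] [IsFiniteMeasure ν] :
    IsFiniteMeasure (mCheck μ ν) := by unfold mCheck; infer_instance

/-- The variable-node operation `⊛` extended bilinearly to finite signed measures. -/
def sConv (x y : SM) : SM :=
  (mConv (jp x) (jp y)).toSignedMeasure - (mConv (jp x) (jn y)).toSignedMeasure
    - (mConv (jn x) (jp y)).toSignedMeasure + (mConv (jn x) (jn y)).toSignedMeasure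

/-- The check-node operation `⊠` extended bilinearly to finite signed measures. -/
def sCheck (x y : SM) : SM :=
  (mCheck (jp x) (jp y)).toSignedMeasure - (mCheck (jp x) (jn y)).toSignedMeasure
    - (mCheck (jn x) (jp y)).toSignedMeasure + (mCheck (jn x) (jn y)).toSignedMeasure

/-- The integrand `log₂(1 + e^{-α})` of the entropy functional (with the harmless
convention that it vanishes at `α = ±∞`; symmetric measures put no mass at `-∞`). -/
def entFn (α : EReal) : ℝ :=
  if α = ⊤ then 0 else if α = ⊥ then 0 else Real.logb 2 (1 + Real.exp (-(α.toReal)))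

/-- The entropy functional `H(x) = ∫ log₂(1 + e^{-α}) x(dα)`. -/
def H (x : SM) : ℝ := sInt entFn x

/-!
With `s = tanh(α/2)` one has `log₂(1 + e^{-α}) = 1 - log₂(1 + s)`; under `⊛` the values of
`tanh(·/2)` combine as `(s + t) / (1 + st)`, under `⊠` they multiply. Since
`1 + (s + t) / (1 + st) = (1 + s)(1 + t) / (1 + st)`, the integrand `h` of `H` satisfies
`h(α + β) + h(2 tanh⁻¹(st)) = h(α) + h(β)` away from `-∞`, and integrating over `μ × ν` gives
`H(μ ⊛ ν) + H(μ ⊠ ν) = ν(ℝ̄) H(μ) + μ(ℝ̄) H(ν)` for finite measures of finite entropy.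
Both sides are bilinear, so the identity persists for signed measures, and differences of
probability measures have total mass zero. Symmetry of `μ` makes `∫ e^{-α/2} dμ` finite, and
`e^{-α/2}` dominates the integrand, so elements of `X` have finite entropy.
-/

open Set

lemma measurable_entFn : Measurable entFn :=
  .ite (measurableSet_singleton ⊤) measurable_const
    (.ite (measurableSet_singleton ⊥) measurable_const (by unfold Real.logb; fun_prop))

lemma measurable_tanhHalf : Measurable tanhHalf :=
  .ite (measurableSet_singleton ⊤) measurable_const
    (.ite (measurableSet_singleton ⊥) measurable_const
      (by simp only [Real.tanh_eq_sinh_div_cosh]; fun_prop))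

lemma measurable_wt : Measurable wt :=
  .ite (measurableSet_singleton ⊥) measurable_const
    (.ite (measurableSet_singleton ⊤) measurable_const (by fun_prop))

lemma measurable_atanhTwo : Measurable atanhTwo :=
  .ite (measurableSet_le measurable_const measurable_id) measurable_const
    (.ite (measurableSet_le measurable_id measurable_const) measurable_const
      (by unfold artanh; fun_prop))

lemma measurable_atanhTwo_tanhHalf_mul :
    Measurable fun p : EReal × EReal => atanhTwo (tanhHalf p.1 * tanhHalf p.2) :=
  measurable_atanhTwo.comp ((measurable_tanhHalf.comp measurable_fst).mul
    (measurable_tanhHalf.comp measurable_snd))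

lemma tanh_add (x y : ℝ) :
    Real.tanh (x + y) = (Real.tanh x + Real.tanh y) / (1 + Real.tanh x * Real.tanh y) := by
  have hx := Real.cosh_pos x
  have hy := Real.cosh_pos y
  simp only [Real.tanh_eq_sinh_div_cosh, Real.sinh_add, Real.cosh_add]
  field_simp

lemma one_add_exp_neg (r : ℝ) : 1 + Real.exp (-r) = 2 / (1 + Real.tanh (r / 2)) := by
  have hc := Real.cosh_pos (r / 2)
  have he : Real.exp (-r) = Real.exp (-(r / 2)) * Real.exp (-(r / 2)) := by
    rw [← Real.exp_add]; ring_nf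
  rw [Real.tanh_eq_sinh_div_cosh, one_add_div hc.ne', add_comm (Real.cosh _), Real.sinh_add_cosh,
    div_div_eq_mul_div, Real.cosh_eq, he, Real.exp_neg]
  field_simp

lemma tanhHalf_coe (r : ℝ) : tanhHalf r = Real.tanh (r / 2) := by
  simp [tanhHalf]

lemma tanhHalf_top : tanhHalf ⊤ = 1 := by
  simp [tanhHalf]

lemma entFn_top : entFn ⊤ = 0 := by
  simp [entFn]

lemma entFn_coe (r : ℝ) : entFn r = Real.logb 2 (1 + Real.exp (-r)) := by
  simp [entFn]

lemma tanhHalf_mem_Ioc {α : EReal} (hα : α ≠ ⊥) : tanhHalf α ∈ Ioc (-1) 1 := by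
  induction α using EReal.rec with
  | bot => exact absurd rfl hα
  | top => simp [tanhHalf_top]
  | coe r =>
    rw [tanhHalf_coe]
    exact ⟨Real.neg_one_lt_tanh _, (Real.tanh_lt_one _).le⟩

lemma entFn_eq_one_sub_logb {α : EReal} (hα : α ≠ ⊥) :
    entFn α = 1 - Real.logb 2 (1 + tanhHalf α) := by
  induction α using EReal.rec with
  | bot => exact absurd rfl hα
  | top => norm_num [entFn_top, tanhHalf_top]
  | coe r =>
    have h := (tanhHalf_mem_Ioc (EReal.coe_ne_bot r)).1
    rw [entFn_coe, one_add_exp_neg, ← tanhHalf_coe, Real.logb_div two_ne_zero (by linarith),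
      Real.logb_self_eq_one one_lt_two]

lemma artanh_eq_real_artanh {t : ℝ} (ht : t ∈ Ioo (-1) 1) : artanh t = Real.artanh t := by
  rw [artanh, Real.artanh_eq_half_log (Ioo_subset_Icc_self ht)]
  ring

lemma atanhTwo_ne_bot {t : ℝ} (ht : t ∈ Ioc (-1) 1) : atanhTwo t ≠ ⊥ := by
  unfold atanhTwo
  split_ifs with h1 h2
  · exact top_ne_bot
  · linarith [ht.1]
  · exact EReal.coe_ne_bot _

lemma tanhHalf_atanhTwo {t : ℝ} (ht : t ∈ Ioc (-1) 1) : tanhHalf (atanhTwo t) = t := by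
  rcases ht.2.eq_or_lt with rfl | hlt
  · simp [atanhTwo, tanhHalf_top]
  · have ht' : t ∈ Ioo (-1) 1 := ⟨ht.1, hlt⟩
    rw [atanhTwo, if_neg hlt.not_ge, if_neg ht.1.not_ge, tanhHalf_coe,
      mul_div_cancel_left₀ _ two_ne_zero, artanh_eq_real_artanh ht', Real.tanh_artanh ht']

lemma tanhHalf_add {α β : EReal} (hα : α ≠ ⊥) (hβ : β ≠ ⊥) :
    tanhHalf (α + β) =
      (tanhHalf α + tanhHalf β) / (1 + tanhHalf α * tanhHalf β) := by
  have hαI := tanhHalf_mem_Ioc hα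
  have hβI := tanhHalf_mem_Ioc hβ
  induction α using EReal.rec with
  | bot => exact absurd rfl hα
  | top =>
    rw [EReal.top_add_of_ne_bot hβ, tanhHalf_top, one_mul, div_self (by linarith [hβI.1])]
  | coe a =>
    induction β using EReal.rec with
    | bot => exact absurd rfl hβ
    | top =>
      rw [EReal.add_top_of_ne_bot hα, tanhHalf_top, mul_one, add_comm (1 : ℝ),
        div_self (by linarith [hαI.1])]
    | coe b =>
      rw [← EReal.coe_add, tanhHalf_coe, tanhHalf_coe, tanhHalf_coe, add_div, tanh_add]

theorem entFn_add_add_entFn_atanhTwo {α β : EReal} (hα : α ≠ ⊥) (hβ : β ≠ ⊥) :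
    entFn (α + β) + entFn (atanhTwo (tanhHalf α * tanhHalf β)) = entFn α + entFn β := by
  obtain ⟨hs₁, hs₂⟩ := tanhHalf_mem_Ioc hα
  obtain ⟨ht₁, ht₂⟩ := tanhHalf_mem_Ioc hβ
  set s := tanhHalf α
  set t := tanhHalf β
  have hst : s * t ∈ Ioc (-1) 1 := ⟨by nlinarith, by nlinarith⟩
  have hden : 0 < 1 + s * t := by linarith [hst.1]
  have hsum : 1 + (s + t) / (1 + s * t) = (1 + s) * (1 + t) / (1 + s * t) := by
    field_simp; ring
  rw [entFn_eq_one_sub_logb (EReal.add_ne_bot_iff.2 ⟨hα, hβ⟩), tanhHalf_add hα hβ, hsum,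
    entFn_eq_one_sub_logb (atanhTwo_ne_bot hst), tanhHalf_atanhTwo hst,
    entFn_eq_one_sub_logb hα, entFn_eq_one_sub_logb hβ,
    Real.logb_div (mul_pos (by linarith) (by linarith)).ne' hden.ne',
    Real.logb_mul (by linarith) (by linarith)]
  ring

lemma entFn_nonneg (α : EReal) : 0 ≤ entFn α := by
  unfold entFn
  split_ifs
  · rfl
  · rfl
  · exact Real.logb_nonneg one_lt_two (by linarith [Real.exp_pos (-α.toReal)])

lemma logb_one_add_exp_neg_le (a : ℝ) :
    Real.logb 2 (1 + Real.exp (-a)) ≤ 3 * Real.exp (-a / 2) := by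
  set w := Real.exp (-a / 2)
  have hw : 0 < w := Real.exp_pos _
  have hsq : Real.exp (-a) = w ^ 2 := by rw [← Real.exp_nat_mul]; ring_nf
  have hlog : Real.log (1 + w ^ 2) ≤ 2 * w := by
    calc Real.log (1 + w ^ 2) ≤ Real.log ((1 + w) ^ 2) :=
          Real.log_le_log (by positivity) (by nlinarith)
      _ = 2 * Real.log (1 + w) := by rw [Real.log_pow]; norm_num
      _ ≤ 2 * w := by linarith [Real.log_le_sub_one_of_pos (by linarith : 0 < 1 + w)]
  -- `2 / log 2 < 3`
  have hlog2 := Real.log_two_gt_d9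
  rw [hsq, Real.logb, div_le_iff₀ (by linarith)]
  nlinarith

lemma ofReal_entFn_le (α : EReal) : ENNReal.ofReal (entFn α) ≤ 3 * wt α := by
  induction α using EReal.rec with
  | bot => simp [wt]
  | top => simp [entFn_top]
  | coe a =>
    rw [entFn_coe, show wt a = ENNReal.ofReal (Real.exp (-a / 2)) by simp [wt],
      ← ENNReal.ofReal_ofNat 3, ← ENNReal.ofReal_mul (by norm_num)]
    exact ENNReal.ofReal_le_ofReal (logb_one_add_exp_neg_le a)

lemma wt_le_one {α : EReal} (hα : 0 ≤ α) : wt α ≤ 1 := by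
  induction α using EReal.rec with
  | bot => simp at hα
  | top => simp [wt]
  | coe a =>
    have ha : 0 ≤ a := by exact_mod_cast hα
    simp only [wt, EReal.coe_ne_bot, EReal.coe_ne_top, if_false, EReal.toReal_coe]
    exact ENNReal.ofReal_le_one.2 (Real.exp_le_one_iff.2 (by linarith))

lemma setLIntegral_wt_Ici_le (μ : Measure EReal) : ∫⁻ α in Ici 0, wt α ∂μ ≤ μ univ :=
  (setLIntegral_mono' measurableSet_Ici fun _ hα => wt_le_one hα).trans_eq
    (setLIntegral_one _) |>.trans (measure_mono (subset_univ _))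

-- Symmetry reflects the part on `α < 0`, where `wt` is unbounded, to `α > 0`, where `wt ≤ 1`.
lemma lintegral_wt_lt_top {μ : Measure EReal} [IsFiniteMeasure μ] (hμ : IsSymmMeasure μ) :
    ∫⁻ α, wt α ∂μ < ⊤ := by
  have hneg : (fun a : EReal => -a) ⁻¹' Ioi 0 = Iio 0 := by
    ext a; simp [EReal.neg_pos]
  have hIio : ∫⁻ α in Iio 0, wt α ∂μ ≤ μ univ := by
    rw [← hneg, hμ _ measurableSet_Ioi]
    exact (lintegral_mono_set Ioi_subset_Ici_self).trans (setLIntegral_wt_Ici_le μ)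
  rw [← lintegral_add_compl _ measurableSet_Iio, compl_Iio]
  exact ENNReal.add_lt_top.2 ⟨hIio.trans_lt (measure_lt_top μ _),
    (setLIntegral_wt_Ici_le μ).trans_lt (measure_lt_top μ _)⟩

/-- Since `entFn ⊥ = 0` is a junk value (the true integrand is `+∞` at `-∞`), finiteness of the
entropy of `μ` has to exclude mass at `⊥` explicitly. -/
def EntropyFinite (μ : Measure EReal) : Prop :=
  (∀ᵐ α ∂μ, α ≠ ⊥) ∧ Integrable entFn μ

lemma EntropyFinite.mono {μ ν : Measure EReal} (hν : EntropyFinite ν) (h : μ ≤ ν) :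
    EntropyFinite μ :=
  ⟨ae_mono h hν.1, hν.2.mono_measure h⟩

lemma EntropyFinite.add {μ ν : Measure EReal} (hμ : EntropyFinite μ) (hν : EntropyFinite ν) :
    EntropyFinite (μ + ν) :=
  ⟨ae_add_measure_iff.2 ⟨hμ.1, hν.1⟩, hμ.2.add_measure hν.2⟩

lemma entropyFinite_of_lintegral_wt_ne_top {μ : Measure EReal} (h : ∫⁻ α, wt α ∂μ ≠ ⊤) :
    EntropyFinite μ := by
  refine ⟨?_, measurable_entFn.aestronglyMeasurable, ?_⟩
  · filter_upwards [ae_lt_top measurable_wt h] with α hα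
    rintro rfl
    simp [wt] at hα
  · rw [hasFiniteIntegral_iff_ofReal (.of_forall entFn_nonneg)]
    calc ∫⁻ α, ENNReal.ofReal (entFn α) ∂μ
        ≤ ∫⁻ α, 3 * wt α ∂μ := lintegral_mono ofReal_entFn_le
      _ = 3 * ∫⁻ α, wt α ∂μ := lintegral_const_mul _ measurable_wt
      _ < ⊤ := ENNReal.mul_lt_top (by norm_num) h.lt_top

lemma IsSymmMeasure.entropyFinite {μ : Measure EReal} [IsFiniteMeasure μ]
    (hμ : IsSymmMeasure μ) : EntropyFinite μ :=
  entropyFinite_of_lintegral_wt_ne_top (lintegral_wt_lt_top hμ).ne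

section Product

variable {μ ν : Measure EReal}

lemma ae_entFn_add_add_entFn_atanhTwo (hμ : EntropyFinite μ) (hν : EntropyFinite ν) :
    ∀ᵐ p ∂μ.prod ν, entFn (p.1 + p.2) + entFn (atanhTwo (tanhHalf p.1 * tanhHalf p.2)) =
      entFn p.1 + entFn p.2 := by
  filter_upwards [Measure.quasiMeasurePreserving_fst.ae hμ.1,
    Measure.quasiMeasurePreserving_snd.ae hν.1] with p h₁ h₂
  exact entFn_add_add_entFn_atanhTwo h₁ h₂

variable [IsFiniteMeasure μ] [IsFiniteMeasure ν]

lemma integrable_entFn_comp_of_ae_le {g : EReal × EReal → EReal} (hg : Measurable g)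
    (hμ : Integrable entFn μ) (hν : Integrable entFn ν)
    (hle : ∀ᵐ p ∂μ.prod ν, entFn (g p) ≤ entFn p.1 + entFn p.2) :
    Integrable (fun p => entFn (g p)) (μ.prod ν) := by
  refine ((hμ.comp_fst ν).add (hν.comp_snd μ)).mono'
    (measurable_entFn.comp hg).aestronglyMeasurable ?_
  filter_upwards [hle] with p hp
  rwa [Real.norm_of_nonneg (entFn_nonneg _)]

lemma integrable_entFn_add (hμ : EntropyFinite μ) (hν : EntropyFinite ν) :
    Integrable (fun p : EReal × EReal => entFn (p.1 + p.2)) (μ.prod ν) := by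
  refine integrable_entFn_comp_of_ae_le (by fun_prop) hμ.2 hν.2 ?_
  filter_upwards [ae_entFn_add_add_entFn_atanhTwo hμ hν] with p hp
  linarith [entFn_nonneg (atanhTwo (tanhHalf p.1 * tanhHalf p.2))]

lemma integrable_entFn_atanhTwo (hμ : EntropyFinite μ) (hν : EntropyFinite ν) :
    Integrable (fun p : EReal × EReal => entFn (atanhTwo (tanhHalf p.1 * tanhHalf p.2)))
      (μ.prod ν) := by
  refine integrable_entFn_comp_of_ae_le measurable_atanhTwo_tanhHalf_mul hμ.2 hν.2 ?_
  filter_upwards [ae_entFn_add_add_entFn_atanhTwo hμ hν] with p hp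
  linarith [entFn_nonneg (p.1 + p.2)]

lemma integrable_entFn_mConv (hμ : EntropyFinite μ) (hν : EntropyFinite ν) :
    Integrable entFn (mConv μ ν) :=
  (integrable_map_measure measurable_entFn.aestronglyMeasurable (by fun_prop)).2
    (integrable_entFn_add hμ hν)

lemma integrable_entFn_mCheck (hμ : EntropyFinite μ) (hν : EntropyFinite ν) :
    Integrable entFn (mCheck μ ν) :=
  (integrable_map_measure measurable_entFn.aestronglyMeasurable
    measurable_atanhTwo_tanhHalf_mul.aemeasurable).2 (integrable_entFn_atanhTwo hμ hν)

theorem integral_entFn_mConv_add_mCheck (hμ : EntropyFinite μ) (hν : EntropyFinite ν) :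
    ∫ α, entFn α ∂mConv μ ν + ∫ α, entFn α ∂mCheck μ ν =
      ν.real univ * ∫ α, entFn α ∂μ + μ.real univ * ∫ α, entFn α ∂ν := by
  rw [mConv, mCheck, integral_map (by fun_prop) measurable_entFn.aestronglyMeasurable,
    integral_map measurable_atanhTwo_tanhHalf_mul.aemeasurable
      measurable_entFn.aestronglyMeasurable,
    ← integral_add (integrable_entFn_add hμ hν) (integrable_entFn_atanhTwo hμ hν),
    integral_congr_ae (ae_entFn_add_add_entFn_atanhTwo hμ hν),
    integral_add (hμ.2.comp_fst ν) (hν.2.comp_snd μ), integral_fun_fst, integral_fun_snd,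
    smul_eq_mul, smul_eq_mul]

end Product

lemma sub_add_eq_sub_add_self {X : Type*} [MeasurableSpace X] (μ ν : Measure X)
    [IsFiniteMeasure μ] [IsFiniteMeasure ν] : μ - ν + ν = ν - μ + μ := by
  rw [← Measure.toSignedMeasure_eq_toSignedMeasure_iff, Measure.toSignedMeasure_add,
    Measure.toSignedMeasure_add, add_comm _ μ.toSignedMeasure, ← sub_eq_sub_iff_add_eq_add]
  exact Measure.sub_toSignedMeasure_eq_toSignedMeasure_sub.symm

section Signed

variable {μ ν : Measure EReal} [IsFiniteMeasure μ] [IsFiniteMeasure ν]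

lemma jp_toSignedMeasure_sub : jp (μ.toSignedMeasure - ν.toSignedMeasure) = μ - ν := by
  simp [jp, Measure.jordanDecompositionOfToSignedMeasureSub_posPart]

lemma jn_toSignedMeasure_sub : jn (μ.toSignedMeasure - ν.toSignedMeasure) = ν - μ := by
  simp [jn, Measure.jordanDecompositionOfToSignedMeasureSub_negPart]

lemma jp_toSignedMeasure : jp μ.toSignedMeasure = μ := by
  simpa using jp_toSignedMeasure_sub (μ := μ) (ν := 0)

lemma sInt_toSignedMeasure_sub {f : EReal → ℝ} (hμ : Integrable f μ) (hν : Integrable f ν) :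
    sInt f (μ.toSignedMeasure - ν.toSignedMeasure) = ∫ α, f α ∂μ - ∫ α, f α ∂ν := by
  have h := congrArg (fun m => ∫ α, f α ∂m) (sub_add_eq_sub_add_self μ ν)
  rw [integral_add_measure (hμ.mono_measure Measure.sub_le) hν,
    integral_add_measure (hν.mono_measure Measure.sub_le) hμ] at h
  rw [sInt, jp_toSignedMeasure_sub, jn_toSignedMeasure_sub]
  linarith

lemma totalVariation_toSignedMeasure_sub_le :
    (μ.toSignedMeasure - ν.toSignedMeasure).totalVariation ≤ μ + ν := by
  simp only [SignedMeasure.totalVariation, Measure.toJordanDecomposition_toSignedMeasure_sub]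
  exact add_le_add Measure.sub_le Measure.sub_le

lemma toSignedMeasure_sub_apply_univ [IsProbabilityMeasure μ] [IsProbabilityMeasure ν] :
    (μ.toSignedMeasure - ν.toSignedMeasure) univ = 0 := by
  simp

end Signed

lemma sInt_toSignedMeasure_sub_sub_add {f : EReal → ℝ} {A B C D : Measure EReal}
    [IsFiniteMeasure A] [IsFiniteMeasure B] [IsFiniteMeasure C] [IsFiniteMeasure D]
    (hA : Integrable f A) (hB : Integrable f B) (hC : Integrable f C) (hD : Integrable f D) :
    sInt f (A.toSignedMeasure - B.toSignedMeasure - C.toSignedMeasure + D.toSignedMeasure) =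
      ∫ α, f α ∂A - ∫ α, f α ∂B - ∫ α, f α ∂C + ∫ α, f α ∂D := by
  rw [show A.toSignedMeasure - B.toSignedMeasure - C.toSignedMeasure + D.toSignedMeasure =
      (A + D).toSignedMeasure - (B + C).toSignedMeasure by
    simp only [Measure.toSignedMeasure_add]; abel,
    sInt_toSignedMeasure_sub (hA.add_measure hD) (hB.add_measure hC),
    integral_add_measure hA hD, integral_add_measure hB hC]
  ring

lemma apply_univ_eq_jp_sub_jn (x : SM) : x univ = (jp x).real univ - (jn x).real univ := by
  conv_lhs => rw [← x.toSignedMeasure_toJordanDecomposition]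
  simp [JordanDecomposition.toSignedMeasure, jp, jn, Measure.real]

lemma MemX.exists_eq_toSignedMeasure {x : SM} (h : MemX x) :
    ∃ (μ : Measure EReal) (_ : IsProbabilityMeasure μ),
      x = μ.toSignedMeasure ∧ EntropyFinite μ := by
  obtain ⟨⟨μ, hμ, rfl⟩, hsymm, -⟩ := h
  exact ⟨μ, hμ, rfl, (jp_toSignedMeasure (μ := μ) ▸ hsymm).entropyFinite⟩

theorem H_sConv_add_H_sCheck {x y : SM} (hx : EntropyFinite x.totalVariation)
    (hy : EntropyFinite y.totalVariation) :
    H (sConv x y) + H (sCheck x y) = y univ * H x + x univ * H y := by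
  have hP₁ : EntropyFinite (jp x) := hx.mono (Measure.le_add_right le_rfl)
  have hN₁ : EntropyFinite (jn x) := hx.mono (Measure.le_add_left le_rfl)
  have hP₂ : EntropyFinite (jp y) := hy.mono (Measure.le_add_right le_rfl)
  have hN₂ : EntropyFinite (jn y) := hy.mono (Measure.le_add_left le_rfl)
  rw [H, H, sConv, sCheck,
    sInt_toSignedMeasure_sub_sub_add (integrable_entFn_mConv hP₁ hP₂)
      (integrable_entFn_mConv hP₁ hN₂) (integrable_entFn_mConv hN₁ hP₂)
      (integrable_entFn_mConv hN₁ hN₂),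
    sInt_toSignedMeasure_sub_sub_add (integrable_entFn_mCheck hP₁ hP₂)
      (integrable_entFn_mCheck hP₁ hN₂) (integrable_entFn_mCheck hN₁ hP₂)
      (integrable_entFn_mCheck hN₁ hN₂),
    apply_univ_eq_jp_sub_jn x, apply_univ_eq_jp_sub_jn y, H, H, sInt, sInt]
  linear_combination integral_entFn_mConv_add_mCheck hP₁ hP₂ -
    integral_entFn_mConv_add_mCheck hP₁ hN₂ - integral_entFn_mConv_add_mCheck hN₁ hP₂ +
    integral_entFn_mConv_add_mCheck hN₁ hN₂

/-- For all symmetric probability measures `x1, x2, x3, x4 ∈ X`,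
`H((x1 - x2) ⊛ (x3 - x4)) + H((x1 - x2) ⊠ (x3 - x4)) = 0`. -/
theorem entropy_duality_double_difference
    (x1 x2 x3 x4 : SM) (h1 : MemX x1) (h2 : MemX x2) (h3 : MemX x3) (h4 : MemX x4) :
    H (sConv (x1 - x2) (x3 - x4)) + H (sCheck (x1 - x2) (x3 - x4)) = 0 := by
  obtain ⟨μ₁, _, rfl, hμ₁⟩ := h1.exists_eq_toSignedMeasure
  obtain ⟨μ₂, _, rfl, hμ₂⟩ := h2.exists_eq_toSignedMeasure
  obtain ⟨μ₃, _, rfl, hμ₃⟩ := h3.exists_eq_toSignedMeasure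
  obtain ⟨μ₄, _, rfl, hμ₄⟩ := h4.exists_eq_toSignedMeasure
  rw [H_sConv_add_H_sCheck ((hμ₁.add hμ₂).mono totalVariation_toSignedMeasure_sub_le)
      ((hμ₃.add hμ₄).mono totalVariation_toSignedMeasure_sub_le),
    toSignedMeasure_sub_apply_univ, toSignedMeasure_sub_apply_univ, zero_mul, zero_mul, add_zero]

end SCLDPC
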